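/- arXiv:1302.6929 — 3 statements merged into one kernel-verified Lean document; each statement's English description precedes it below -/
import Mathlib

section
/- For any skew product F in the class 𝒮, the nonwandering set Ω(F) is contained in the anchored set Indiff(F); equivalently, Ω(F) is disjoint from Up(F) and from Down(F). -/
open Set MeasureTheory Filter Topology

namespace SkewPaper

/-- A bi-infinite sequence over the alphabet `{1,…,N}` (modelled as `Fin N`) is allowed
by the 0-1 transition matrix `A`. -/
def Allowed {N : ℕ} (A : Fin N → Fin N → Bool) (ω : ℤ → Fin N) : Prop :=
  ∀ n : ℤ, A (ω n) (ω (n + 1)) = true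

/-- The subshift of finite type `Σ ⊆ {1,…,N}^ℤ` determined by the transition matrix `A`,
with the product (= metric `d(ω̄,ω) = 2^{-min{|n| : ω̄ₙ ≠ ωₙ}}`) topology. -/
abbrev Sig (N : ℕ) (A : Fin N → Fin N → Bool) : Type :=
  {ω : ℤ → Fin N // Allowed A ω}

variable {N : ℕ} {A : Fin N → Fin N → Bool}

/-- The left shift `σ : Σ → Σ`. -/
def shift (ω : Sig N A) : Sig N A :=
  ⟨fun n => ω.1 (n + 1), fun n => ω.2 (n + 1)⟩

/-- The inverse `σ⁻¹` of the left shift. -/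
def shiftInv (ω : Sig N A) : Sig N A :=
  ⟨fun n => ω.1 (n - 1), fun n => by
    show A (ω.1 (n - 1)) (ω.1 (n + 1 - 1)) = true
    have h := ω.2 (n - 1)
    have e1 : n - 1 + 1 = n := by ring
    have e2 : n + 1 - 1 = n := by ring
    rw [e1] at h; rw [e2]; exact h⟩

/-- Topological transitivity of the shift `σ` on `Σ`. -/
def ShiftTransitive (N : ℕ) (A : Fin N → Fin N → Bool) : Prop :=
  ∀ U V : Set (Sig N A), IsOpen U → IsOpen V → U.Nonempty → V.Nonempty →
    ∃ n : ℕ, ((shift (A := A))^[n] '' U ∩ V).Nonempty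

/-- The class `𝒮` of skew products `F(ω,x) = (σω, f_ω(x))` over the subshift `Σ`,
with fiber `I = [0,1]`.  The fiber maps `f_ω` (encoded as maps `ℝ → ℝ` whose behaviour
is prescribed on `I`) are orientation-preserving `C¹` diffeomorphisms sending `I`
strictly inside itself, with `C¹` inverses `fInv ω`, and `ω ↦ f_ω` is continuous in the
`C¹` sense. -/
structure SkewSys (N : ℕ) (A : Fin N → Fin N → Bool) where
  f : Sig N A → ℝ → ℝ
  fInv : Sig N A → ℝ → ℝ
  contDiff : ∀ ω, ContDiffOn ℝ 1 (f ω) (Icc 0 1)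
  deriv_pos : ∀ ω, ∀ x ∈ Icc (0:ℝ) 1, 0 < derivWithin (f ω) (Icc 0 1) x
  maps_in : ∀ ω, MapsTo (f ω) (Icc 0 1) (Ioo 0 1)
  leftInv : ∀ ω, ∀ x ∈ Icc (0:ℝ) 1, fInv ω (f ω x) = x
  inv_contDiff : ∀ ω, ContDiffOn ℝ 1 (fInv ω) (Icc 0 1)
  cont : ContinuousOn (fun p : Sig N A × ℝ => f p.1 p.2) (univ ×ˢ Icc 0 1)
  cont_deriv : ContinuousOn
    (fun p : Sig N A × ℝ => derivWithin (f p.1) (Icc 0 1) p.2) (univ ×ˢ Icc 0 1)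
  inv_cont : ContinuousOn (fun p : Sig N A × ℝ => fInv p.1 p.2) (univ ×ˢ Icc 0 1)
  inv_cont_deriv : ContinuousOn
    (fun p : Sig N A × ℝ => derivWithin (fInv p.1) (Icc 0 1) p.2) (univ ×ˢ Icc 0 1)

/-- The skew product map `F : Σ × ℝ → Σ × ℝ`, `(ω,x) ↦ (σω, f_ω(x))`. -/
def FMap (F : SkewSys N A) : Sig N A × ℝ → Sig N A × ℝ :=
  fun p => (shift p.1, F.f p.1 p.2)

/-- The phase space `Σ × I`, viewed inside `Σ × ℝ`. -/
def phaseSpace (N : ℕ) (A : Fin N → Fin N → Bool) : Set (Sig N A × ℝ) :=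
  univ ×ˢ Icc 0 1

/-- The graph of `γ` drifts up: `F(Γ) > Γ`, i.e. the graph function
`ω ↦ f_{σ⁻¹ω}(γ(σ⁻¹ω))` of `F(Γ)` is pointwise strictly above `γ`. -/
def DriftsUp (F : SkewSys N A) (γ : Sig N A → ℝ) : Prop :=
  ∀ ω, γ ω < F.f (shiftInv ω) (γ (shiftInv ω))

/-- The graph of `γ` drifts down: `F(Γ) < Γ`. -/
def DriftsDown (F : SkewSys N A) (γ : Sig N A → ℝ) : Prop :=
  ∀ ω, F.f (shiftInv ω) (γ (shiftInv ω)) < γ ω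

/-- `Up(F)`: the set of points `p = (ω,x)` drifting up, i.e. such that there is a
continuous `γ : Σ → I` whose graph drifts up with `γ(ω) < x < f_{σ⁻¹ω}(γ(σ⁻¹ω))`. -/
def Up (F : SkewSys N A) : Set (Sig N A × ℝ) :=
  {p | ∃ γ : Sig N A → ℝ, Continuous γ ∧ (∀ ω, γ ω ∈ Icc (0:ℝ) 1) ∧ DriftsUp F γ ∧
    γ p.1 < p.2 ∧ p.2 < F.f (shiftInv p.1) (γ (shiftInv p.1))}

/-- `Down(F)`: the set of points drifting down. -/
def Down (F : SkewSys N A) : Set (Sig N A × ℝ) :=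
  {p | ∃ γ : Sig N A → ℝ, Continuous γ ∧ (∀ ω, γ ω ∈ Icc (0:ℝ) 1) ∧ DriftsDown F γ ∧
    F.f (shiftInv p.1) (γ (shiftInv p.1)) < p.2 ∧ p.2 < γ p.1}

/-- The anchored set `Indiff(F) = (Σ × I) \ (Up(F) ∪ Down(F))`. -/
def Indiff (F : SkewSys N A) : Set (Sig N A × ℝ) :=
  phaseSpace N A \ (Up F ∪ Down F)

/-- The nonwandering set `Ω(F)`: points `p ∈ Σ × I` such that every neighborhood `U`
of `p` in `Σ × I` satisfies `F^n(U) ∩ U ≠ ∅` for some `n ≥ 1`. -/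
def NonWandering (F : SkewSys N A) : Set (Sig N A × ℝ) :=
  {p | p ∈ phaseSpace N A ∧ ∀ U : Set (Sig N A × ℝ), IsOpen U → p ∈ U →
    ∃ n : ℕ, 1 ≤ n ∧ ∃ q ∈ U ∩ phaseSpace N A, (FMap F)^[n] q ∈ U ∩ phaseSpace N A}

/-- The partial order `F ≺ F̃` on `𝒮`: `f_ω(x) < f̃_ω(x)` for all `ω ∈ Σ`, `x ∈ I`. -/
def Prec (F G : SkewSys N A) : Prop :=
  ∀ ω, ∀ x ∈ Icc (0:ℝ) 1, F.f ω x < G.f ω x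

/-- A skew product is multistep if its fiber maps depend only on finitely many
coordinates `ω_{-m}, …, ω_m` of `ω`. -/
def Multistep (F : SkewSys N A) : Prop :=
  ∃ m : ℕ, ∀ ω ω' : Sig N A, (∀ n : ℤ, n.natAbs ≤ m → ω.1 n = ω'.1 n) → F.f ω = F.f ω'

/-- The `C¹` distance `dist(F,F̃) = max_ω dist_{C¹}(f_ω^{±1}, f̃_ω^{±1})` on `𝒮`. -/
noncomputable def SDist (F G : SkewSys N A) : ℝ :=
  ⨆ p : Sig N A × Icc (0:ℝ) 1,
    max
      (max |F.f p.1 p.2 - G.f p.1 p.2|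
        |derivWithin (F.f p.1) (Icc 0 1) p.2 - derivWithin (G.f p.1) (Icc 0 1) p.2|)
      (max |F.fInv p.1 p.2 - G.fInv p.1 p.2|
        |derivWithin (F.fInv p.1) (Icc 0 1) p.2 - derivWithin (G.fInv p.1) (Icc 0 1) p.2|)

/-- The standard measure `m = μ × Leb` on `Σ × I` (with `Leb` Lebesgue measure
restricted to `I = [0,1]`). -/
noncomputable def stdMeasure (μ : Measure (Sig N A)) : Measure (Sig N A × ℝ) :=
  μ.prod (volume.restrict (Icc 0 1))

/-- A family `(F_τ)_{τ ∈ (a,b)}` in `𝒮` is monotone increasing if `F_{τ₁} ≺ F_{τ₂}`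
whenever `τ₁ < τ₂`. -/
def MonoFam (F : ℝ → SkewSys N A) (a b : ℝ) : Prop :=
  ∀ τ₁ ∈ Ioo a b, ∀ τ₂ ∈ Ioo a b, τ₁ < τ₂ → Prec (F τ₁) (F τ₂)

/-- A family `(F_τ)_{τ ∈ (a,b)}` in `𝒮` is continuous in `τ` for the metric `dist`. -/
def ContFam (F : ℝ → SkewSys N A) (a b : ℝ) : Prop :=
  ∀ τ ∈ Ioo a b, ∀ ε : ℝ, 0 < ε → ∃ δ > 0,
    ∀ τ' ∈ Ioo a b, |τ' - τ| < δ → SDist (F τ') (F τ) < ε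

/-- The pushforward `Γ ↦ F(Γ)` on graph functions: the graph of `pushGraph F γ`,
namely `ω ↦ f_{σ⁻¹ω}(γ(σ⁻¹ω))`, is the image `F(Γ)` of the graph `Γ` of `γ`. -/
def pushGraph (F : SkewSys N A) (γ : Sig N A → ℝ) : Sig N A → ℝ :=
  fun ω => F.f (shiftInv ω) (γ (shiftInv ω))


lemma shiftInv_shift (ω : Sig N A) : shiftInv (shift ω) = ω := by
  apply Subtype.ext; funext n
  show ω.1 (n - 1 + 1) = ω.1 n
  norm_num

lemma continuous_shiftInv : Continuous (shiftInv (N := N) (A := A)) := by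
  apply Continuous.subtype_mk
  exact continuous_pi fun n => (continuous_apply (n - 1)).comp continuous_subtype_val

lemma fmono (F : SkewSys N A) (ω : Sig N A) : StrictMonoOn (F.f ω) (Icc 0 1) := by
  apply strictMonoOn_of_deriv_pos (convex_Icc 0 1) ((F.contDiff ω).continuousOn)
  intro x hx
  rw [interior_Icc] at hx
  have h : Icc (0:ℝ) 1 ∈ 𝓝 x := Icc_mem_nhds hx.1 hx.2
  rw [← derivWithin_of_mem_nhds h]
  exact F.deriv_pos ω x (Ioo_subset_Icc_self hx)

lemma pushGraph_cont (F : SkewSys N A) {γ : Sig N A → ℝ} (hγ : Continuous γ)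
    (hI : ∀ ω, γ ω ∈ Icc (0:ℝ) 1) : Continuous (pushGraph F γ) := by
  have h : Continuous (fun ω : Sig N A => (shiftInv ω, γ (shiftInv ω))) :=
    continuous_shiftInv.prodMk (hγ.comp continuous_shiftInv)
  exact F.cont.comp_continuous h (fun ω => ⟨mem_univ _, hI _⟩)

lemma up_iter (F : SkewSys N A) {γ : Sig N A → ℝ} (hI : ∀ ω, γ ω ∈ Icc (0:ℝ) 1)
    (hup : ∀ ω, γ ω < pushGraph F γ ω)
    (q : Sig N A × ℝ) (hq2 : q.2 ∈ Icc (0:ℝ) 1) (hlt : γ q.1 < q.2) :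
    ∀ n, 1 ≤ n → pushGraph F γ (((FMap F)^[n] q).1) < ((FMap F)^[n] q).2 ∧
      ((FMap F)^[n] q).2 ∈ Icc (0:ℝ) 1 := by
  have step : ∀ r : Sig N A × ℝ, r.2 ∈ Icc (0:ℝ) 1 → γ r.1 < r.2 →
      pushGraph F γ ((FMap F r).1) < (FMap F r).2 ∧ (FMap F r).2 ∈ Icc (0:ℝ) 1 := by
    intro r hr2 hrlt
    constructor
    · show F.f (shiftInv (shift r.1)) (γ (shiftInv (shift r.1))) < F.f r.1 r.2
      rw [shiftInv_shift]
      exact fmono F r.1 (hI r.1) hr2 hrlt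
    · exact Ioo_subset_Icc_self (F.maps_in r.1 hr2)
  intro n hn
  induction n, hn using Nat.le_induction with
  | base => simpa using step q hq2 hlt
  | succ n hn ih =>
    rw [Function.iterate_succ_apply']
    exact step _ ih.2 (lt_trans (hup _) ih.1)

lemma down_iter (F : SkewSys N A) {γ : Sig N A → ℝ} (hI : ∀ ω, γ ω ∈ Icc (0:ℝ) 1)
    (hdn : ∀ ω, pushGraph F γ ω < γ ω)
    (q : Sig N A × ℝ) (hq2 : q.2 ∈ Icc (0:ℝ) 1) (hlt : q.2 < γ q.1) :
    ∀ n, 1 ≤ n → ((FMap F)^[n] q).2 < pushGraph F γ (((FMap F)^[n] q).1) ∧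
      ((FMap F)^[n] q).2 ∈ Icc (0:ℝ) 1 := by
  have step : ∀ r : Sig N A × ℝ, r.2 ∈ Icc (0:ℝ) 1 → r.2 < γ r.1 →
      (FMap F r).2 < pushGraph F γ ((FMap F r).1) ∧ (FMap F r).2 ∈ Icc (0:ℝ) 1 := by
    intro r hr2 hrlt
    constructor
    · show F.f r.1 r.2 < F.f (shiftInv (shift r.1)) (γ (shiftInv (shift r.1)))
      rw [shiftInv_shift]
      exact fmono F r.1 hr2 (hI r.1) hrlt
    · exact Ioo_subset_Icc_self (F.maps_in r.1 hr2)
  intro n hn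
  induction n, hn using Nat.le_induction with
  | base => simpa using step q hq2 hlt
  | succ n hn ih =>
    rw [Function.iterate_succ_apply']
    exact step _ ih.2 (lt_trans ih.1 (hdn _))

lemma nw_disj_up (F : SkewSys N A) : NonWandering F ∩ Up F = ∅ := by
  ext p
  simp only [mem_inter_iff, mem_empty_iff_false, iff_false, not_and]
  rintro ⟨hp, hnw⟩ ⟨γ, hγc, hγI, hγup, h1, h2⟩
  set U : Set (Sig N A × ℝ) := {q | γ q.1 < q.2 ∧ q.2 < pushGraph F γ q.1} with hU
  have hUopen : IsOpen U :=
    (isOpen_lt (hγc.comp continuous_fst) continuous_snd).inter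
      (isOpen_lt continuous_snd ((pushGraph_cont F hγc hγI).comp continuous_fst))
  obtain ⟨n, hn1, q, ⟨hqU, hqP⟩, hfqU, hfqP⟩ := hnw U hUopen ⟨h1, h2⟩
  have := (up_iter F hγI hγup q hqP.2 hqU.1 n hn1).1
  exact absurd hfqU.2 (not_lt.2 this.le)

lemma nw_disj_down (F : SkewSys N A) : NonWandering F ∩ Down F = ∅ := by
  ext p
  simp only [mem_inter_iff, mem_empty_iff_false, iff_false, not_and]
  rintro ⟨hp, hnw⟩ ⟨γ, hγc, hγI, hγdn, h1, h2⟩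
  set U : Set (Sig N A × ℝ) := {q | pushGraph F γ q.1 < q.2 ∧ q.2 < γ q.1} with hU
  have hUopen : IsOpen U :=
    (isOpen_lt ((pushGraph_cont F hγc hγI).comp continuous_fst) continuous_snd).inter
      (isOpen_lt continuous_snd (hγc.comp continuous_fst))
  obtain ⟨n, hn1, q, ⟨hqU, hqP⟩, hfqU, hfqP⟩ := hnw U hUopen ⟨h1, h2⟩
  have := (down_iter F hγI hγdn q hqP.2 hqU.2 n hn1).1
  exact absurd hfqU.1 (not_lt.2 this.le)

/-- For any `F ∈ 𝒮`, the nonwandering set `Ω(F)` is contained in the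
anchored set `Indiff(F)`; equivalently, `Ω(F)` is disjoint from `Up(F)` and `Down(F)`. -/
theorem nonwandering_subset_indiff {N : ℕ} {A : Fin N → Fin N → Bool} (hN : 2 ≤ N)
    (htrans : ShiftTransitive N A) (F : SkewSys N A) :
    NonWandering F ⊆ Indiff F
      ∧ NonWandering F ∩ Up F = ∅
      ∧ NonWandering F ∩ Down F = ∅ := by
  refine ⟨?_, nw_disj_up F, nw_disj_down F⟩
  intro p hp
  refine ⟨hp.1, fun hmem => ?_⟩
  rcases hmem with h | h
  · exact absurd (show p ∈ NonWandering F ∩ Up F from ⟨hp, h⟩)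
      (by rw [nw_disj_up F]; exact notMem_empty p)
  · exact absurd (show p ∈ NonWandering F ∩ Down F from ⟨hp, h⟩)
      (by rw [nw_disj_down F]; exact notMem_empty p)
end SkewPaper
end

section
/- Let F₁, F₂ ∈ 𝒮 with F₁ ≺ F₂. Then there exists a multistep skew product G ∈ 𝒮 with F₁ ≺ G ≺ F₂. -/
open Set MeasureTheory Filter Topology

namespace SkewPaper

variable {N : ℕ} {A : Fin N → Fin N → Bool}

/-
Read ω only through its window ω_{-m}, …, ω_m: replace f₁ at ω by f₁ at a fixed sequence
`truncate m ω` with the same window. Since (ω, x) ↦ f₁ ω x is uniformly continuous on the compact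
space Σ × I, this moves f₁ by less than any given η once m is large. Multiplying the result by a
constant a slightly above 1 then lifts it strictly above F₁ (f₁ ≥ μ > 0, so take η = (a - 1) μ)
and keeps it strictly below F₂ (F₂ - F₁ ≥ ε > 0, so take a < 1 + ε / 2). Scaling by a > 1, rather
than adding a constant, keeps the inverse y ↦ f⁻¹(y / a) defined on all of I.
-/

theorem mapsTo_div_Icc {a : ℝ} (ha : 1 ≤ a) :
    MapsTo (· / a) (Icc (0 : ℝ) 1) (Icc 0 1) :=
  fun _ hy => ⟨div_nonneg hy.1 (by linarith), div_le_one_of_le₀ (hy.2.trans ha) (by linarith)⟩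

theorem derivWithin_comp_div_Icc {g : ℝ → ℝ} {a y : ℝ} (ha : 1 ≤ a)
    (hg : DifferentiableOn ℝ g (Icc 0 1)) (hy : y ∈ Icc (0 : ℝ) 1) :
    derivWithin (fun y => g (y / a)) (Icc 0 1) y = derivWithin g (Icc 0 1) (y / a) / a := by
  have hdiv : HasDerivWithinAt (· / a) (1 / a) (Icc 0 1) y :=
    (hasDerivWithinAt_id y _).div_const a
  have hcomp := (hg _ (mapsTo_div_Icc ha hy)).hasDerivWithinAt.comp y hdiv (mapsTo_div_Icc ha)
  exact (hcomp.derivWithin (uniqueDiffOn_Icc one_pos y hy)).trans (mul_one_div _ _)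

theorem isClosed_setOf_allowed : IsClosed {ω : ℤ → Fin N | Allowed A ω} := by
  simp only [Allowed, ofPred_forall]
  exact isClosed_iInter fun n => isClosed_eq (by fun_prop) continuous_const

instance : CompactSpace (Sig N A) :=
  isCompact_iff_compactSpace.mp isClosed_setOf_allowed.isCompact

def window (m : ℕ) (ω : Sig N A) : Finset.Icc (-(m : ℤ)) m → Fin N :=
  fun n => ω.1 n

theorem window_eq_window_iff {m : ℕ} {ω ω' : Sig N A} :
    window m ω = window m ω' ↔ ∀ n : ℤ, n.natAbs ≤ m → ω.1 n = ω'.1 n := by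
  simp only [funext_iff, window, Subtype.forall, Finset.mem_Icc]
  exact forall_congr' fun n => ⟨fun h hn => h (by omega), fun h hn => h (by omega)⟩

theorem continuous_window (m : ℕ) : Continuous (window (A := A) m) :=
  continuous_pi fun n => (continuous_apply (n : ℤ)).comp continuous_subtype_val

section truncate

variable [Nonempty (Sig N A)]

noncomputable def truncate (m : ℕ) : Sig N A → Sig N A :=
  Function.invFun (window m) ∘ window m

theorem window_truncate (m : ℕ) (ω : Sig N A) : window m (truncate m ω) = window m ω :=
  Function.invFun_eq ⟨ω, rfl⟩

theorem continuous_truncate (m : ℕ) : Continuous (truncate (A := A) m) :=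
  continuous_of_discreteTopology.comp (continuous_window m)

end truncate

theorem exists_window_abs_sub_lt {Y : Type*} [TopologicalSpace Y] [CompactSpace Y]
    {g : Sig N A × Y → ℝ} (hg : Continuous g) {δ : ℝ} (hδ : 0 < δ) :
    ∃ m : ℕ, ∀ ω ω' : Sig N A, window m ω = window m ω' → ∀ y, |g (ω, y) - g (ω', y)| < δ := by
  let V : ℕ → Set ((Sig N A × Sig N A) × Y) := fun m => {q | window m q.1.1 = window m q.1.2}
  have hV_closed (m : ℕ) : IsClosed (V m) :=
    isClosed_eq ((continuous_window m).comp continuous_fst.fst)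
      ((continuous_window m).comp continuous_fst.snd)
  have hV_anti : Antitone V := fun m m' hmm' q hq =>
    window_eq_window_iff.2 fun n hn => window_eq_window_iff.1 hq n (hn.trans hmm')
  let U := {q : (Sig N A × Sig N A) × Y | |g (q.1.1, q.2) - g (q.1.2, q.2)| < δ}
  have hU_open : IsOpen U := isOpen_lt (by fun_prop) continuous_const
  have hU_nhds : ∀ q ∈ ⋂ m, V m, U ∈ 𝓝 q := fun q hq => by
    have hdiag : q.1.1 = q.1.2 := Subtype.ext <| funext fun n =>
      window_eq_window_iff.1 (mem_iInter.1 hq n.natAbs) n le_rfl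
    exact hU_open.mem_nhds (by simp [U, hdiag, hδ])
  obtain ⟨m, hm⟩ := exists_subset_nhds_of_isCompact' hV_anti.directed_ge
    (fun m => (hV_closed m).isCompact) hV_closed hU_nhds
  exact ⟨m, fun ω ω' h y => hm (a := ((ω, ω'), y)) h⟩

theorem continuousOn_comp_prodMap {g : Sig N A × ℝ → ℝ} (hg : ContinuousOn g (univ ×ˢ Icc 0 1))
    {t : Sig N A → Sig N A} (ht : Continuous t) {φ : ℝ → ℝ} (hφ : Continuous φ)
    (hφI : MapsTo φ (Icc 0 1) (Icc 0 1)) :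
    ContinuousOn (fun p : Sig N A × ℝ => g (t p.1, φ p.2)) (univ ×ˢ Icc 0 1) :=
  hg.comp (ht.prodMap hφ).continuousOn fun _ hp => ⟨trivial, hφI hp.2⟩

namespace SkewSys

theorem continuous_restrict (F : SkewSys N A) :
    Continuous fun p : Sig N A × Icc (0 : ℝ) 1 => F.f p.1 p.2 :=
  F.cont.comp_continuous (continuous_fst.prodMk (continuous_subtype_val.comp continuous_snd))
    fun p => ⟨trivial, p.2.2⟩

theorem exists_pos_le [Nonempty (Sig N A)] (F : SkewSys N A) :
    ∃ μ > 0, ∀ ω, ∀ x ∈ Icc (0 : ℝ) 1, μ ≤ F.f ω x := by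
  obtain ⟨p, -, hp⟩ :=
    isCompact_univ.exists_isMinOn univ_nonempty F.continuous_restrict.continuousOn
  exact ⟨_, (F.maps_in p.1 p.2.2).1, fun ω x hx => isMinOn_univ_iff.1 hp (ω, ⟨x, hx⟩)⟩

theorem exists_le_lt_one [Nonempty (Sig N A)] (F : SkewSys N A) :
    ∃ M ∈ Ioo (0 : ℝ) 1, ∀ ω, ∀ x ∈ Icc (0 : ℝ) 1, F.f ω x ≤ M := by
  obtain ⟨p, -, hp⟩ :=
    isCompact_univ.exists_isMaxOn univ_nonempty F.continuous_restrict.continuousOn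
  exact ⟨_, F.maps_in p.1 p.2.2, fun ω x hx => isMaxOn_univ_iff.1 hp (ω, ⟨x, hx⟩)⟩

def reindex (F : SkewSys N A) (t : Sig N A → Sig N A) (ht : Continuous t) : SkewSys N A where
  f ω := F.f (t ω)
  fInv ω := F.fInv (t ω)
  contDiff ω := F.contDiff (t ω)
  deriv_pos ω := F.deriv_pos (t ω)
  maps_in ω := F.maps_in (t ω)
  leftInv ω := F.leftInv (t ω)
  inv_contDiff ω := F.inv_contDiff (t ω)
  cont := continuousOn_comp_prodMap F.cont ht continuous_id (mapsTo_id _)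
  cont_deriv := continuousOn_comp_prodMap F.cont_deriv ht continuous_id (mapsTo_id _)
  inv_cont := continuousOn_comp_prodMap F.inv_cont ht continuous_id (mapsTo_id _)
  inv_cont_deriv := continuousOn_comp_prodMap F.inv_cont_deriv ht continuous_id (mapsTo_id _)

noncomputable def scale (F : SkewSys N A) (a : ℝ) (ha : 1 ≤ a)
    (hlt : ∀ ω, ∀ x ∈ Icc (0 : ℝ) 1, a * F.f ω x < 1) : SkewSys N A where
  f ω x := a * F.f ω x
  fInv ω y := F.fInv ω (y / a)
  contDiff ω := contDiffOn_const.mul (F.contDiff ω)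
  deriv_pos ω x hx := by
    rw [derivWithin_const_mul a ((F.contDiff ω).differentiableOn one_ne_zero x hx)]
    exact mul_pos (by linarith) (F.deriv_pos ω x hx)
  maps_in ω x hx := ⟨mul_pos (by linarith) (F.maps_in ω hx).1, hlt ω x hx⟩
  leftInv ω x hx := by
    simp only [mul_div_cancel_left₀ _ (show a ≠ 0 by positivity)]
    exact F.leftInv ω x hx
  inv_contDiff ω := (F.inv_contDiff ω).comp (contDiffOn_id.div_const a) (mapsTo_div_Icc ha)
  cont := continuousOn_const.mul F.cont
  cont_deriv := (continuousOn_const.mul F.cont_deriv).congr fun p hp =>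
    derivWithin_const_mul a ((F.contDiff p.1).differentiableOn one_ne_zero p.2 hp.2)
  inv_cont := continuousOn_comp_prodMap F.inv_cont continuous_id (continuous_id.div_const a)
    (mapsTo_div_Icc ha)
  inv_cont_deriv := ((continuousOn_comp_prodMap F.inv_cont_deriv continuous_id
    (continuous_id.div_const a) (mapsTo_div_Icc ha)).div_const a).congr fun p hp =>
      derivWithin_comp_div_Icc ha ((F.inv_contDiff p.1).differentiableOn one_ne_zero) hp.2

end SkewSys

theorem Prec.exists_add_le [Nonempty (Sig N A)] {F G : SkewSys N A}
    (h : Prec F G) : ∃ ε > 0, ∀ ω, ∀ x ∈ Icc (0 : ℝ) 1, F.f ω x + ε ≤ G.f ω x := by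
  obtain ⟨p, -, hp⟩ := isCompact_univ.exists_isMinOn univ_nonempty
    (G.continuous_restrict.sub F.continuous_restrict).continuousOn
  refine ⟨_, sub_pos.2 (h p.1 p.2 p.2.2), fun ω x hx => ?_⟩
  have hmin := isMinOn_univ_iff.1 hp (ω, ⟨x, hx⟩)
  simp only [Pi.sub_apply] at hmin
  linarith

theorem multistep_between_general {N : ℕ} {A : Fin N → Fin N → Bool}
    (F₁ F₂ : SkewSys N A) (hprec : Prec F₁ F₂) :
    ∃ G : SkewSys N A, Multistep G ∧ Prec F₁ G ∧ Prec G F₂ := by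
  cases isEmpty_or_nonempty (Sig N A)
  · exact ⟨F₁, ⟨0, fun ω => isEmptyElim ω⟩, fun ω => isEmptyElim ω, fun ω => isEmptyElim ω⟩
  obtain ⟨μ, hμ, hμ_le⟩ := F₁.exists_pos_le
  obtain ⟨M, ⟨hM₀, hM₁⟩, hle_M⟩ := F₁.exists_le_lt_one
  obtain ⟨ε, hε, hgap⟩ := hprec.exists_add_le
  obtain ⟨a, ha₁, ha⟩ : ∃ a, 1 < a ∧ a < min M⁻¹ (1 + ε / 2) :=
    exists_between (lt_min (one_lt_inv₀ hM₀ |>.2 hM₁) (by linarith))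
  have haM : a * M < 1 := by
    simpa [hM₀.ne'] using mul_lt_mul_of_pos_right (ha.trans_le (min_le_left _ _)) hM₀
  obtain ⟨m, hm⟩ := exists_window_abs_sub_lt F₁.continuous_restrict
    (δ := (a - 1) * μ) (by nlinarith)
  have hclose : ∀ ω, ∀ x ∈ Icc (0 : ℝ) 1,
      |F₁.f ω x - F₁.f (truncate m ω) x| < (a - 1) * μ := fun ω x hx =>
    hm ω _ (window_truncate m ω).symm ⟨x, hx⟩
  refine ⟨(F₁.reindex (truncate m) (continuous_truncate m)).scale a ha₁.le fun ω x hx => ?_,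
    ⟨m, fun ω ω' h => ?_⟩, fun ω x hx => ?_, fun ω x hx => ?_⟩
  all_goals dsimp only [SkewSys.scale, SkewSys.reindex]
  · nlinarith [hle_M (truncate m ω) x hx]
  · simp only [truncate, Function.comp_apply, window_eq_window_iff.2 h]
  · nlinarith [abs_lt.1 (hclose ω x hx), hμ_le (truncate m ω) x hx]
  · nlinarith [abs_lt.1 (hclose ω x hx), hμ_le (truncate m ω) x hx, hle_M (truncate m ω) x hx,
      hgap ω x hx, min_le_right M⁻¹ (1 + ε / 2)]

/-- If `F₁ ≺ F₂` in `𝒮`, then there is a multistep `G ∈ 𝒮` with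
`F₁ ≺ G ≺ F₂`. -/
theorem multistep_between {N : ℕ} {A : Fin N → Fin N → Bool} (hN : 2 ≤ N)
    (htrans : ShiftTransitive N A) (F₁ F₂ : SkewSys N A) (hprec : Prec F₁ F₂) :
    ∃ G : SkewSys N A, Multistep G ∧ Prec F₁ G ∧ Prec G F₂ :=
  multistep_between_general F₁ F₂ hprec

end SkewPaper
end

section
/- The set 𝒮_Indiff = {(p, F) : F ∈ 𝒮, p ∈ Indiff(F)} is a closed subset of (Σ × I) × 𝒮, where 𝒮 carries the metric dist. -/
open Set MeasureTheory Filter Topology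

namespace SkewPaper

variable {N : ℕ} {A : Fin N → Fin N → Bool}

section Aux

variable {N : ℕ} {A : Fin N → Fin N → Bool}

instance inst_s15 : CompactSpace (Sig N A) := by
  have hclosed : IsClosed {ω : ℤ → Fin N | Allowed A ω} := by
    have heq : {ω : ℤ → Fin N | Allowed A ω}
        = ⋂ n : ℤ, {ω : ℤ → Fin N | A (ω n) (ω (n + 1)) = true} := by
      ext ω; simp [Allowed, Set.mem_iInter]
    rw [heq]
    refine isClosed_iInter fun n => ?_
    have hd : Continuous fun q : Fin N × Fin N => A q.1 q.2 :=
      continuous_of_discreteTopology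
    have hc : Continuous fun ω : ℤ → Fin N => A (ω n) (ω (n + 1)) := by
      have h0 := hd.comp (f := fun ω : ℤ → Fin N => ((ω n, ω (n + 1)) : Fin N × Fin N))
        ((continuous_apply n).prodMk (continuous_apply (n + 1)))
      exact h0
    exact isClosed_eq hc continuous_const
  exact isCompact_iff_compactSpace.mp hclosed.isCompact

lemma shiftInv_continuous : Continuous (shiftInv (A := A)) := by
  apply Continuous.subtype_mk
  exact continuous_pi fun n => (continuous_apply (n - 1)).comp continuous_subtype_val

lemma contOn_comp {g : Sig N A × ℝ → ℝ}
    (h : ContinuousOn g (univ ×ˢ Icc 0 1)) :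
    Continuous (fun p : Sig N A × Icc (0:ℝ) 1 => g (p.1, (p.2 : ℝ))) := by
  have hc : Continuous fun p : Sig N A × Icc (0:ℝ) 1 => ((p.1, (p.2 : ℝ)) : Sig N A × ℝ) :=
    continuous_fst.prodMk (continuous_subtype_val.comp continuous_snd)
  exact h.comp_continuous hc (fun p => mem_prod.mpr ⟨mem_univ _, p.2.2⟩)

lemma sdist_term_bdd (F G : SkewSys N A) :
    BddAbove (Set.range fun p : Sig N A × Icc (0:ℝ) 1 =>
      max
        (max |F.f p.1 p.2 - G.f p.1 p.2|
          |derivWithin (F.f p.1) (Icc 0 1) p.2 - derivWithin (G.f p.1) (Icc 0 1) p.2|)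
        (max |F.fInv p.1 p.2 - G.fInv p.1 p.2|
          |derivWithin (F.fInv p.1) (Icc 0 1) p.2 - derivWithin (G.fInv p.1) (Icc 0 1) p.2|)) := by
  have h1 := contOn_comp F.cont
  have h2 := contOn_comp G.cont
  have h3 := contOn_comp F.cont_deriv
  have h4 := contOn_comp G.cont_deriv
  have h5 := contOn_comp F.inv_cont
  have h6 := contOn_comp G.inv_cont
  have h7 := contOn_comp F.inv_cont_deriv
  have h8 := contOn_comp G.inv_cont_deriv
  have hc : Continuous fun p : Sig N A × Icc (0:ℝ) 1 =>
      max
        (max |F.f p.1 p.2 - G.f p.1 p.2|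
          |derivWithin (F.f p.1) (Icc 0 1) p.2 - derivWithin (G.f p.1) (Icc 0 1) p.2|)
        (max |F.fInv p.1 p.2 - G.fInv p.1 p.2|
          |derivWithin (F.fInv p.1) (Icc 0 1) p.2 - derivWithin (G.fInv p.1) (Icc 0 1) p.2|) :=
    Continuous.max
      (Continuous.max (h1.sub h2).abs (h3.sub h4).abs)
      (Continuous.max (h5.sub h6).abs (h7.sub h8).abs)
  exact (isCompact_range hc).bddAbove

lemma abs_le_sdist (F G : SkewSys N A) (ω : Sig N A) {x : ℝ} (hx : x ∈ Icc (0:ℝ) 1) :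
    |F.f ω x - G.f ω x| ≤ SDist F G := by
  have h := le_ciSup (sdist_term_bdd F G) (⟨ω, ⟨x, hx⟩⟩ : Sig N A × Icc (0:ℝ) 1)
  exact le_trans (le_trans (le_max_left _ _) (le_max_left _ _)) h

lemma push_cont (F : SkewSys N A) {γ : Sig N A → ℝ} (hγ : Continuous γ)
    (hI : ∀ ω, γ ω ∈ Icc (0:ℝ) 1) :
    Continuous fun ω => F.f (shiftInv ω) (γ (shiftInv ω)) := by
  have hc : Continuous fun ω : Sig N A => ((shiftInv ω, γ (shiftInv ω)) : Sig N A × ℝ) :=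
    shiftInv_continuous.prodMk (hγ.comp shiftInv_continuous)
  have h0 : Continuous
      ((fun p : Sig N A × ℝ => F.f p.1 p.2) ∘ fun ω => (shiftInv ω, γ (shiftInv ω))) :=
    ContinuousOn.comp_continuous F.cont hc (fun ω => mem_prod.mpr ⟨mem_univ _, hI (shiftInv ω)⟩)
  exact h0

end Aux

/-- The set `𝒮_Indiff = {(p,F) : p ∈ Indiff(F)}` is closed in
`(Σ × I) × 𝒮` (stated as sequential closedness, using the metric `SDist` on `𝒮`). -/
theorem indiff_pairs_closed {N : ℕ} {A : Fin N → Fin N → Bool} (hN : 2 ≤ N)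
    (htrans : ShiftTransitive N A)
    (p : Sig N A × ℝ) (F : SkewSys N A)
    (ps : ℕ → Sig N A × ℝ) (Fs : ℕ → SkewSys N A)
    (hmem : ∀ n, ps n ∈ Indiff (Fs n))
    (hp : Tendsto ps atTop (𝓝 p))
    (hF : Tendsto (fun n => SDist (Fs n) F) atTop (𝓝 0)) :
    p ∈ Indiff F := by
  classical
  haveI : Nonempty (Sig N A) := ⟨p.1⟩
  have hfst : Tendsto (fun n => (ps n).1) atTop (𝓝 p.1) := (continuous_fst.tendsto p).comp hp
  have hsnd : Tendsto (fun n => (ps n).2) atTop (𝓝 p.2) := (continuous_snd.tendsto p).comp hp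
  refine ⟨?_, ?_⟩
  · refine mem_prod.mpr ⟨mem_univ _, ?_⟩
    exact isClosed_Icc.mem_of_tendsto hsnd
      (Filter.Eventually.of_forall fun n => ((hmem n).1).2)
  · rintro (hU | hD)
    · obtain ⟨γ, hγc, hγI, hdrift, h1, h2⟩ := hU
      set h : Sig N A → ℝ := fun ω => F.f (shiftInv ω) (γ (shiftInv ω)) with hh_def
      have hhc : Continuous h := push_cont F hγc hγI
      obtain ⟨ω₀, -, hmin⟩ := isCompact_univ.exists_isMinOn univ_nonempty
        ((hhc.sub hγc).continuousOn (s := univ))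
      set ε : ℝ := h ω₀ - γ ω₀ with hε_def
      have hε : 0 < ε := sub_pos.mpr (hdrift ω₀)
      have e1 : ∀ᶠ n in atTop, SDist (Fs n) F < ε := by
        have : ∀ᶠ x in 𝓝 (0:ℝ), x < ε := eventually_lt_nhds hε
        exact hF.eventually this
      have e2 : ∀ᶠ n in atTop, γ ((ps n).1) < (ps n).2 :=
        Filter.Tendsto.eventually_lt ((hγc.tendsto _).comp hfst) hsnd h1
      have e3 : ∀ᶠ n in atTop, (ps n).2 + SDist (Fs n) F < h ((ps n).1) := by
        have hl : Tendsto (fun n => (ps n).2 + SDist (Fs n) F) atTop (𝓝 p.2) := by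
          simpa using hsnd.add hF
        exact Filter.Tendsto.eventually_lt hl ((hhc.tendsto _).comp hfst) h2
      obtain ⟨n, hn1, hn2, hn3⟩ := (e1.and (e2.and e3)).exists
      refine (hmem n).2 (Or.inl ⟨γ, hγc, hγI, ?_, hn2, ?_⟩)
      · intro ω
        have hb := abs_le_sdist (Fs n) F (shiftInv ω) (hγI (shiftInv ω))
        have hm := hmin (mem_univ ω)
        have := abs_le.mp hb
        simp only [hh_def] at hm
        have : ε ≤ F.f (shiftInv ω) (γ (shiftInv ω)) - γ ω := hm
        have h2' := (abs_le.mp hb).1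
        linarith
      · have hb := abs_le_sdist (Fs n) F (shiftInv (ps n).1) (hγI (shiftInv (ps n).1))
        have h2' := (abs_le.mp hb).1
        have : (ps n).2 + SDist (Fs n) F < F.f (shiftInv (ps n).1) (γ (shiftInv (ps n).1)) := hn3
        linarith
    · obtain ⟨γ, hγc, hγI, hdrift, h2, h1⟩ := hD
      set h : Sig N A → ℝ := fun ω => F.f (shiftInv ω) (γ (shiftInv ω)) with hh_def
      have hhc : Continuous h := push_cont F hγc hγI
      obtain ⟨ω₀, -, hmin⟩ := isCompact_univ.exists_isMinOn univ_nonempty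
        ((hγc.sub hhc).continuousOn (s := univ))
      set ε : ℝ := γ ω₀ - h ω₀ with hε_def
      have hε : 0 < ε := sub_pos.mpr (hdrift ω₀)
      have e1 : ∀ᶠ n in atTop, SDist (Fs n) F < ε := by
        have : ∀ᶠ x in 𝓝 (0:ℝ), x < ε := eventually_lt_nhds hε
        exact hF.eventually this
      have e2 : ∀ᶠ n in atTop, (ps n).2 < γ ((ps n).1) :=
        Filter.Tendsto.eventually_lt hsnd ((hγc.tendsto _).comp hfst) h1
      have e3 : ∀ᶠ n in atTop, h ((ps n).1) + SDist (Fs n) F < (ps n).2 := by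
        have hl : Tendsto (fun n => h ((ps n).1) + SDist (Fs n) F) atTop (𝓝 (h p.1)) := by
          simpa using (((hhc.tendsto _).comp hfst).add hF)
        exact Filter.Tendsto.eventually_lt hl hsnd h2
      obtain ⟨n, hn1, hn2, hn3⟩ := (e1.and (e2.and e3)).exists
      refine (hmem n).2 (Or.inr ⟨γ, hγc, hγI, ?_, ?_, hn2⟩)
      · intro ω
        have hb := abs_le_sdist (Fs n) F (shiftInv ω) (hγI (shiftInv ω))
        have hm := hmin (mem_univ ω)
        have : ε ≤ γ ω - F.f (shiftInv ω) (γ (shiftInv ω)) := hm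
        have h2' := (abs_le.mp hb).2
        linarith
      · have hb := abs_le_sdist (Fs n) F (shiftInv (ps n).1) (hγI (shiftInv (ps n).1))
        have h2' := (abs_le.mp hb).2
        have : F.f (shiftInv (ps n).1) (γ (shiftInv (ps n).1)) + SDist (Fs n) F < (ps n).2 := hn3
        linarith
end SkewPaper
end
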